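/- Let T be a real 3×3 matrix with largest singular value T₁, and let E_NS be any correlation function admitting an LHS model. Then ∫_{S²}∫_{S²} (m · T n) · E_NS(m,n) dΩ(m) dΩ(n) ≤ (8π²/3) · T₁. -/

import Mathlib

/-!
With `E(m,n) = ∑ p_λ I_λ(m) ⟪n, λ⃗_λ⟫`, the second-moment identity
`∫ ⟪n,a⟫⟪n,b⟫ dΩ(n) = (4π/3)⟪a,b⟫` turns the `n`-integral into `(4π/3) ∑ p_λ I_λ(m) ⟪m, T λ⃗_λ⟫`.
Since `|I_λ| ≤ 1`, the `m`-integral of each term is at most `∫ |⟪m, T λ⃗_λ⟫| dΩ(m) = 2π ‖T λ⃗_λ‖`,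
and `‖T λ⃗_λ‖ ≤ T₁`.

Both sphere integrals come from Gaussian integrals in polar coordinates: for `h` homogeneous of
degree `k` on `ℝᵈ`, `∫ h(x) e^{-‖x‖²} dx = (∫_{S^{d-1}} h) Γ((k+d)/2) / 2`, while by rotation
invariance `∫ |⟪x,u⟫|^k e^{-‖x‖²} dx` factors into one-dimensional Gaussian integrals.
-/

open MeasureTheory

noncomputable section

/-- `ℝ³` with the Euclidean norm. -/
abbrev V3 : Type := EuclideanSpace ℝ (Fin 3)

/-- The unit sphere `S² ⊂ ℝ³` (as a subtype). -/
abbrev Sph : Type := Metric.sphere (0 : V3) 1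

/-- The rotation-invariant surface measure `dΩ` on the unit sphere `S² ⊂ ℝ³`,
with total measure `4π`. -/
def dOmega : Measure Sph := (volume : Measure V3).toSphere

/-- Euclidean dot product on `ℝ³`. -/
def dot (x y : V3) : ℝ := ∑ i, x i * y i

/-- The bilinear form `m · T n = ∑ᵢⱼ Tᵢⱼ mᵢ nⱼ` associated to a real `3×3` matrix `T`. -/
def bilin (T : Matrix (Fin 3) (Fin 3) ℝ) (m n : V3) : ℝ := ∑ i, ∑ j, T i j * m i * n j

/-- A local-hidden-state (LHS, non-steering) model for a correlation function `E` on `S²×S²`: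
a finite index set, probabilities `p λ ≥ 0` summing to `1`, measurable response functions
`I(·,λ) : S² → [-1,1]`, and unit (Bloch) vectors `λ⃗_λ ∈ ℝ³` reproducing
`E(m,n) = ∑_λ p_λ I(m,λ) (n · λ⃗_λ)` for all unit vectors `m, n`. -/
def HasLHSModel (E : V3 → V3 → ℝ) : Prop :=
  ∃ (N : ℕ) (p : Fin N → ℝ) (I : Fin N → Sph → ℝ) (lam : Fin N → V3),
    (∀ l, 0 ≤ p l) ∧ (∑ l, p l) = 1 ∧
    (∀ l, Measurable (I l)) ∧
    (∀ l m, |I l m| ≤ 1) ∧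
    (∀ l, ‖lam l‖ = 1) ∧
    (∀ m n : Sph, E m n = ∑ l, p l * I l m * dot n (lam l))

/-- The largest singular value of `T`, i.e. the supremum of `m · T n` over unit vectors. -/
def maxSingularValue (T : Matrix (Fin 3) (Fin 3) ℝ) : ℝ :=
  sSup {x : ℝ | ∃ m n : V3, ‖m‖ = 1 ∧ ‖n‖ = 1 ∧ x = bilin T m n}

open Real Set Metric Module
open scoped InnerProductSpace Matrix

theorem integral_Ioi_pow_mul_exp_neg_sq (n : ℕ) :
    ∫ r in Ioi (0 : ℝ), r ^ n * exp (-r ^ 2) = Gamma ((n + 1) / 2) / 2 := by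
  rw [div_eq_inv_mul, ← one_div, ← integral_rpow_mul_exp_neg_rpow zero_lt_two
    (neg_one_lt_zero.trans_le n.cast_nonneg)]
  refine setIntegral_congr_fun measurableSet_Ioi fun r _ => ?_
  rw [rpow_natCast, rpow_two]

theorem integral_abs_pow_mul_exp_neg_sq (n : ℕ) :
    ∫ t : ℝ, |t| ^ n * exp (-t ^ 2) = Gamma ((n + 1) / 2) := by
  have h := integral_comp_abs (f := fun t : ℝ => t ^ n * exp (-t ^ 2))
  simp only [sq_abs] at h
  rw [h, integral_Ioi_pow_mul_exp_neg_sq]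
  ring

section Polar

variable {E : Type*} [NormedAddCommGroup E] [NormedSpace ℝ E] [FiniteDimensional ℝ E]
  [Nontrivial E] [MeasurableSpace E] [BorelSpace E] (μ : Measure E) [μ.IsAddHaarMeasure]

theorem integral_polar_addHaar (g : E → ℝ) (f : ℝ → ℝ) :
    ∫ x, g (‖x‖⁻¹ • x) * f ‖x‖ ∂μ =
      (∫ ω : sphere (0 : E) 1, g ω ∂μ.toSphere) *
        ∫ r in Ioi (0 : ℝ), r ^ (finrank ℝ E - 1) * f r := by
  calc ∫ x, g (‖x‖⁻¹ • x) * f ‖x‖ ∂μ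
      = ∫ x : ({0}ᶜ : Set E), g (‖(x : E)‖⁻¹ • x) * f ‖(x : E)‖ ∂μ.comap (↑) := by
        rw [integral_subtype_comap (measurableSet_singleton _).compl
          (fun x => g (‖x‖⁻¹ • x) * f ‖x‖), restrict_compl_singleton]
    _ = ∫ p : sphere (0 : E) 1 × Ioi (0 : ℝ), g p.1 * f p.2
          ∂μ.toSphere.prod (Measure.volumeIoiPow (finrank ℝ E - 1)) := by
        simpa only [homeomorphUnitSphereProd_apply_fst_coe, homeomorphUnitSphereProd_apply_snd_coe]
          using μ.measurePreserving_homeomorphUnitSphereProd.integral_comp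
            (Homeomorph.measurableEmbedding _) (fun p => g p.1 * f p.2)
    _ = _ := by
        rw [integral_prod_mul (f := fun ω : sphere (0 : E) 1 => g ω)
          (g := fun r : Ioi (0 : ℝ) => f r)]
        congr 1
        simp only [Measure.volumeIoiPow, ENNReal.ofReal]
        rw [integral_withDensity_eq_integral_smul
            ((measurable_subtype_coe.pow_const _).real_toNNReal),
          integral_subtype_comap measurableSet_Ioi fun r : ℝ ↦ Real.toNNReal (r ^ _) • f r]
        refine setIntegral_congr_fun measurableSet_Ioi fun r hr ↦ ?_
        rw [NNReal.smul_def, Real.coe_toNNReal _ (pow_nonneg hr.out.le _), smul_eq_mul]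

theorem integral_mul_exp_neg_norm_sq_of_homogeneous {h : E → ℝ} {k : ℕ}
    (hh : ∀ c : ℝ, 0 < c → ∀ x, h (c • x) = c ^ k * h x) :
    ∫ x, h x * exp (-‖x‖ ^ 2) ∂μ =
      (∫ ω : sphere (0 : E) 1, h ω ∂μ.toSphere) * (Gamma ((k + finrank ℝ E) / 2) / 2) := by
  have hpolar : ∀ x ≠ (0 : E),
      h x * exp (-‖x‖ ^ 2) = h (‖x‖⁻¹ • x) * (‖x‖ ^ k * exp (-‖x‖ ^ 2)) := by
    intro x hx
    have hx' : 0 < ‖x‖ := norm_pos_iff.2 hx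
    rw [← smul_inv_smul₀ hx'.ne' x, hh _ hx', smul_inv_smul₀ hx'.ne']
    ring
  have hexp : (k + finrank ℝ E : ℝ) = ((finrank ℝ E - 1 + k : ℕ) : ℝ) + 1 := by
    push_cast [Nat.cast_sub (finrank_pos (R := ℝ) (M := E))]
    ring
  rw [integral_congr_ae ((Measure.ae_ne μ 0).mono hpolar),
    integral_polar_addHaar μ h (fun r => r ^ k * exp (-r ^ 2)), hexp,
    ← integral_Ioi_pow_mul_exp_neg_sq]
  congr 1
  refine setIntegral_congr_fun measurableSet_Ioi fun r _ => ?_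
  rw [← mul_assoc, ← pow_add]

end Polar

namespace EuclideanSpace

variable {ι : Type*} [Fintype ι]

theorem integral_comp_apply_mul_exp_neg_norm_sq (φ : ℝ → ℝ) (i : ι) :
    ∫ x : EuclideanSpace ℝ ι, φ (x i) * exp (-‖x‖ ^ 2) =
      (∫ t, φ t * exp (-t ^ 2)) * √π ^ (Fintype.card ι - 1) := by
  classical
  set f : ι → ℝ → ℝ :=
    Function.update (fun _ t => exp (-t ^ 2)) i (fun t => φ t * exp (-t ^ 2))
  have hprod : ∀ y : ι → ℝ, φ (y i) * exp (-‖WithLp.toLp 2 y‖ ^ 2) = ∏ k, f k (y k) := by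
    intro y
    have hcompl : ∏ k ∈ {i}ᶜ, f k (y k) = ∏ k ∈ {i}ᶜ, exp (-y k ^ 2) :=
      Finset.prod_congr rfl fun k hk => by simp_all [f]
    rw [Fintype.prod_eq_mul_prod_compl i, hcompl, EuclideanSpace.norm_sq_eq,
      ← Finset.sum_neg_distrib, exp_sum, Fintype.prod_eq_mul_prod_compl i]
    simp [f, mul_assoc]
  have hfactor : ∀ k, ∫ t, f k t =
      Function.update (fun _ => √π) i (∫ t, φ t * exp (-t ^ 2)) k := by
    intro k
    rcases eq_or_ne k i with rfl | hk
    · simp [f]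
    · simpa [f, hk] using integral_gaussian 1
  rw [← (PiLp.volume_preserving_toLp ι).integral_comp
      (MeasurableEquiv.toLp 2 (ι → ℝ)).measurableEmbedding]
  simp only [hprod]
  rw [integral_fintype_prod_volume_eq_prod, Finset.prod_congr rfl fun k _ => hfactor k,
    Finset.prod_update_of_mem (Finset.mem_univ i), Finset.prod_const, Finset.card_sdiff]
  simp

theorem integral_comp_inner_mul_exp_neg_norm_sq (φ : ℝ → ℝ) {u : EuclideanSpace ℝ ι}
    (hu : ‖u‖ = 1) :
    ∫ x : EuclideanSpace ℝ ι, φ ⟪x, u⟫_ℝ * exp (-‖x‖ ^ 2) =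
      (∫ t, φ t * exp (-t ^ 2)) * √π ^ (Fintype.card ι - 1) := by
  classical
  obtain ⟨i, -⟩ : ∃ i, u i ≠ 0 := by
    by_contra! h
    simp [show u = 0 from by ext; simp [h]] at hu
  let e := Submodule.reflection (ℝ ∙ (u - EuclideanSpace.single i 1))ᗮ
  have heu : e u = EuclideanSpace.single i 1 := Submodule.reflection_sub (by simp [hu])
  rw [← integral_comp_apply_mul_exp_neg_norm_sq φ i,
    ← e.symm.measurePreserving.integral_comp e.symm.toHomeomorph.measurableEmbedding]
  congr 1 with x
  rw [LinearIsometryEquiv.norm_map, ← e.inner_map_map, e.apply_symm_apply, heu]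
  simp [EuclideanSpace.inner_single_right]

theorem integral_toSphere_abs_inner_pow {k : ℕ} (hk : k ≠ 0) (v : EuclideanSpace ℝ ι) :
    ∫ ω : sphere (0 : EuclideanSpace ℝ ι) 1, |⟪(ω : EuclideanSpace ℝ ι), v⟫_ℝ| ^ k
        ∂volume.toSphere =
      2 * Gamma ((k + 1) / 2) * √π ^ (Fintype.card ι - 1) / Gamma ((k + Fintype.card ι) / 2) *
        ‖v‖ ^ k := by
  rcases eq_or_ne v 0 with rfl | hv
  · simp [hk]
  have : Nontrivial (EuclideanSpace ℝ ι) := nontrivial_of_ne v 0 hv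
  set u := ‖v‖⁻¹ • v
  have hu : ‖u‖ = 1 := norm_smul_inv_norm hv
  have hvu : ∀ x : EuclideanSpace ℝ ι, |⟪x, v⟫_ℝ| ^ k = ‖v‖ ^ k * |⟪x, u⟫_ℝ| ^ k := by
    intro x
    rw [real_inner_smul_right, abs_mul, abs_inv, abs_norm, mul_pow, ← mul_assoc, ← mul_pow,
      mul_inv_cancel₀ (norm_ne_zero_iff.2 hv), one_pow, one_mul]
  have hgauss := integral_mul_exp_neg_norm_sq_of_homogeneous volume
    (h := fun x : EuclideanSpace ℝ ι => |⟪x, u⟫_ℝ| ^ k) (k := k) fun c hc x => by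
      rw [real_inner_smul_left, abs_mul, abs_of_pos hc, mul_pow]
  rw [integral_comp_inner_mul_exp_neg_norm_sq (fun t => |t| ^ k) hu,
    integral_abs_pow_mul_exp_neg_sq, finrank_euclideanSpace] at hgauss
  have hΓ : Gamma ((k + Fintype.card ι) / 2) ≠ 0 := (Gamma_pos_of_pos (by positivity)).ne'
  simp only [hvu, integral_const_mul]
  field_simp
  linear_combination -2 * hgauss

end EuclideanSpace

theorem integral_mul_le_integral_abs {α : Type*} [MeasurableSpace α] {μ : Measure α}
    {f g : α → ℝ} (hf : AEStronglyMeasurable f μ) (hf1 : ∀ x, |f x| ≤ 1) (hg : Integrable g μ) :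
    ∫ x, f x * g x ∂μ ≤ ∫ x, |g x| ∂μ :=
  integral_mono (hg.bdd_mul hf (ae_of_all _ hf1)) hg.abs fun x =>
    calc f x * g x ≤ |f x| * |g x| := abs_mul (f x) (g x) ▸ le_abs_self _
      _ ≤ |g x| := mul_le_of_le_one_left (abs_nonneg _) (hf1 x)

instance : IsFiniteMeasure dOmega := by unfold dOmega; infer_instance

theorem Continuous.integrable_dOmega {f : Sph → ℝ} (hf : Continuous f) : Integrable f dOmega :=
  hf.integrable_of_hasCompactSupport (HasCompactSupport.of_compactSpace f)

theorem integral_abs_inner_dOmega (v : V3) :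
    ∫ ω : Sph, |⟪(ω : V3), v⟫_ℝ| ∂dOmega = 2 * π * ‖v‖ := by
  have h := EuclideanSpace.integral_toSphere_abs_inner_pow one_ne_zero v
  norm_num [Gamma_one, Gamma_two, sq_sqrt pi_pos.le] at h
  exact h

theorem integral_inner_sq_dOmega (v : V3) :
    ∫ ω : Sph, ⟪(ω : V3), v⟫_ℝ ^ 2 ∂dOmega = 4 * π / 3 * ‖v‖ ^ 2 := by
  have h := EuclideanSpace.integral_toSphere_abs_inner_pow two_ne_zero v
  have hΓ : Gamma (5 / 2) = 3 / 2 * Gamma (3 / 2) := by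
    rw [show (5 / 2 : ℝ) = 3 / 2 + 1 by norm_num, Gamma_add_one (by norm_num)]
  have hΓ' : Gamma (3 / 2) ≠ 0 := (Gamma_pos_of_pos (by norm_num)).ne'
  norm_num [sq_abs, sq_sqrt pi_pos.le] at h
  rw [dOmega, h, hΓ]
  field_simp
  ring

theorem integral_inner_mul_inner_dOmega (a b : V3) :
    ∫ ω : Sph, ⟪(ω : V3), a⟫_ℝ * ⟪(ω : V3), b⟫_ℝ ∂dOmega = 4 * π / 3 * ⟪a, b⟫_ℝ := by
  have hpol : ∀ ω : V3,
      ⟪ω, a⟫_ℝ * ⟪ω, b⟫_ℝ = (⟪ω, a + b⟫_ℝ ^ 2 - ⟪ω, a - b⟫_ℝ ^ 2) / 4 := by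
    intro ω
    rw [inner_add_right, inner_sub_right]
    ring
  have hint : ∀ v : V3, Integrable (fun ω : Sph => ⟪(ω : V3), v⟫_ℝ ^ 2) dOmega :=
    fun v => Continuous.integrable_dOmega (by fun_prop)
  simp only [hpol]
  rw [integral_div, integral_sub (hint _) (hint _), integral_inner_sq_dOmega,
    integral_inner_sq_dOmega, norm_add_sq_real, norm_sub_sq_real]
  ring

theorem dot_eq_inner (x y : V3) : dot x y = ⟪x, y⟫_ℝ := by
  simp [dot, PiLp.inner_apply, mul_comm]

@[fun_prop]
theorem Continuous.dot {α : Type*} [TopologicalSpace α] {f g : α → V3} (hf : Continuous f)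
    (hg : Continuous g) : Continuous fun x => dot (f x) (g x) := by
  unfold _root_.dot
  fun_prop

section Matrix

variable (T : Matrix (Fin 3) (Fin 3) ℝ)

@[fun_prop]
theorem Continuous.bilin {α : Type*} [TopologicalSpace α] {f g : α → V3} (hf : Continuous f)
    (hg : Continuous g) : Continuous fun x => bilin T (f x) (g x) := by
  unfold _root_.bilin
  fun_prop

theorem bilin_eq_inner (m n : V3) : bilin T m n = ⟪m, Matrix.toEuclideanLin T n⟫_ℝ := by
  simp only [bilin, PiLp.inner_apply, Matrix.toLpLin_apply, Matrix.mulVec, dotProduct,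
    RCLike.inner_apply, conj_trivial, Finset.sum_mul]
  exact Finset.sum_congr rfl fun _ _ => Finset.sum_congr rfl fun _ _ => by ring

theorem bilin_eq_inner_transpose (m n : V3) :
    bilin T m n = ⟪Matrix.toEuclideanLin Tᵀ m, n⟫_ℝ := by
  simp only [bilin, PiLp.inner_apply, Matrix.toLpLin_apply, Matrix.mulVec, dotProduct,
    Matrix.transpose_apply, RCLike.inner_apply, conj_trivial, Finset.mul_sum]
  rw [Finset.sum_comm]
  exact Finset.sum_congr rfl fun _ _ => Finset.sum_congr rfl fun _ _ => by ring

theorem bddAbove_bilin :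
    BddAbove {x : ℝ | ∃ m n : V3, ‖m‖ = 1 ∧ ‖n‖ = 1 ∧ x = bilin T m n} := by
  let A := LinearMap.toContinuousLinearMap (Matrix.toEuclideanLin T)
  refine ⟨‖A‖, ?_⟩
  rintro _ ⟨m, n, hm, hn, rfl⟩
  calc bilin T m n ≤ ‖m‖ * ‖A n‖ := (bilin_eq_inner T m n).trans_le (real_inner_le_norm _ _)
    _ ≤ ‖A‖ := by simpa [hm, hn] using A.le_opNorm n

theorem norm_toEuclideanLin_le_maxSingularValue {v : V3} (hv : ‖v‖ = 1) :
    ‖Matrix.toEuclideanLin T v‖ ≤ maxSingularValue T := by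
  set w := Matrix.toEuclideanLin T v
  obtain ⟨m, hm, hmw⟩ : ∃ m : V3, ‖m‖ = 1 ∧ ⟪m, w⟫_ℝ = ‖w‖ := by
    rcases eq_or_ne w 0 with hw | hw
    · simpa [hw] using exists_norm_eq V3 zero_le_one
    · refine ⟨‖w‖⁻¹ • w, norm_smul_inv_norm hw, ?_⟩
      rw [real_inner_smul_left, real_inner_self_eq_norm_sq]
      field_simp
  exact le_csSup (bddAbove_bilin T) ⟨m, v, hm, hv, by rw [bilin_eq_inner, hmw]⟩

theorem integral_bilin_mul_dot_dOmega (m a : V3) :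
    ∫ n : Sph, bilin T m n * dot n a ∂dOmega = 4 * π / 3 * bilin T m a := by
  have hinner : ∀ n : V3,
      bilin T m n * dot n a = ⟪n, Matrix.toEuclideanLin Tᵀ m⟫_ℝ * ⟪n, a⟫_ℝ := by
    intro n
    rw [bilin_eq_inner_transpose, dot_eq_inner, real_inner_comm n]
  simp only [hinner]
  rw [integral_inner_mul_inner_dOmega, bilin_eq_inner_transpose]

theorem integral_bilin_mul_sum_dOmega {N : ℕ} (c : Fin N → ℝ) (lam : Fin N → V3) (m : V3) :
    ∫ n : Sph, bilin T m n * ∑ l, c l * dot n (lam l) ∂dOmega =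
      4 * π / 3 * ∑ l, c l * bilin T m (lam l) := by
  simp only [Finset.mul_sum, mul_left_comm (bilin T m _)]
  rw [integral_finsetSum _ fun l _ => (Continuous.integrable_dOmega (by fun_prop)).const_mul _]
  simp only [integral_const_mul, integral_bilin_mul_dot_dOmega]
  exact Finset.sum_congr rfl fun l _ => by ring

theorem integral_mul_bilin_le_dOmega {I : Sph → ℝ} (hI : Measurable I) (hI1 : ∀ m, |I m| ≤ 1)
    {a : V3} (ha : ‖a‖ = 1) :
    ∫ m : Sph, I m * bilin T m a ∂dOmega ≤ 2 * π * maxSingularValue T :=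
  calc ∫ m : Sph, I m * bilin T m a ∂dOmega
      ≤ ∫ m : Sph, |⟪(m : V3), Matrix.toEuclideanLin T a⟫_ℝ| ∂dOmega := by
        simp only [bilin_eq_inner]
        exact integral_mul_le_integral_abs hI.aestronglyMeasurable hI1
          (Continuous.integrable_dOmega (by fun_prop))
    _ ≤ 2 * π * maxSingularValue T := by
        rw [integral_abs_inner_dOmega]
        gcongr
        exact norm_toEuclideanLin_le_maxSingularValue T ha

end Matrix

/-- For any real `3×3` matrix `T` with largest singular value `T₁` and any
correlation function `E_NS` admitting an LHS model,
`∫∫ (m · T n) E_NS(m,n) dΩ(m) dΩ(n) ≤ (8π²/3) T₁`. -/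
theorem scalar_product_nonsteering_bound (T : Matrix (Fin 3) (Fin 3) ℝ) (E : V3 → V3 → ℝ)
    (h : HasLHSModel E) :
    (∫ m, ∫ n, bilin T m n * E m n ∂dOmega ∂dOmega) ≤
      (8 * Real.pi ^ 2 / 3) * maxSingularValue T := by
  obtain ⟨N, p, I, lam, hp0, hp1, hI, hI1, hlam, hE⟩ := h
  have hint : ∀ l, Integrable (fun m : Sph => I l m * bilin T m (lam l)) dOmega := fun l =>
    (Continuous.integrable_dOmega (by fun_prop)).bdd_mul (hI l).aestronglyMeasurable
      (ae_of_all _ (hI1 l))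
  calc ∫ m, ∫ n, bilin T m n * E m n ∂dOmega ∂dOmega
      = ∫ m : Sph, 4 * π / 3 * ∑ l, p l * (I l m * bilin T m (lam l)) ∂dOmega := by
        refine integral_congr_ae (ae_of_all _ fun m => ?_)
        simp only [hE]
        rw [integral_bilin_mul_sum_dOmega]
        simp only [mul_assoc]
    _ = 4 * π / 3 * ∑ l, p l * ∫ m, I l m * bilin T m (lam l) ∂dOmega := by
        rw [integral_const_mul, integral_finsetSum _ fun l _ => (hint l).const_mul _]
        simp only [integral_const_mul]
    _ ≤ 4 * π / 3 * ∑ l, p l * (2 * π * maxSingularValue T) := by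
        gcongr with l
        · exact hp0 l
        · exact integral_mul_bilin_le_dOmega T (hI l) (hI1 l) (hlam l)
    _ = 8 * π ^ 2 / 3 * maxSingularValue T := by
        rw [← Finset.sum_mul, hp1]
        ring

end
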